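/- arXiv:2412.06399 — 2 statements merged into one kernel-verified Lean document; each statement's English description precedes it below -/
import Mathlib

section
/- Let n ≥ b ≥ 3 and α ∈ [0,1). Let G⋆ be a connected K_{1,b}-minor free graph on n vertices attaining the maximum A_α-spectral radius among all connected K_{1,b}-minor free graphs on n vertices, x its Perron vector, v* a vertex of maximum coordinate, U = N_{G⋆}(v*), U_1 = {v ∈ U : d_U(v) = b − 2}, U_2 = U ∖ U_1, W = V(G⋆) ∖ (U ∪ {v*}), and N²(v*) = {w ∈ W : dist_{G⋆}(v*, w) = 2}. Then for every vertex v ∈ U ∪ W: d_W(v) = 0 if v ∈ U_1; d_W(v) ≤ 1 if v ∈ U_2 ∪ N²(v*); and d_W(v) ≤ 2 in all remaining cases (i.e., v ∈ W ∖ N²(v*)). Here d_X(v) denotes the number of neighbors of v lying in the set X. -/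
open scoped Classical


/-- `H` is a minor of `G` (branch-set / minor-model definition). -/
def SimpleGraph.IsMinor {W V : Type*} (H : SimpleGraph W) (G : SimpleGraph V) : Prop :=
  ∃ f : W → Set V,
    (∀ w, (f w).Nonempty) ∧
    (∀ w, (G.induce (f w)).Connected) ∧
    (∀ w₁ w₂, w₁ ≠ w₂ → Disjoint (f w₁) (f w₂)) ∧
    (∀ w₁ w₂, H.Adj w₁ w₂ → ∃ v₁ ∈ f w₁, ∃ v₂ ∈ f w₂, G.Adj v₁ v₂)

/-- `G` has no `K_{a,b}`-minor. -/
def kabMinorFree (a b : ℕ) {V : Type*} (G : SimpleGraph V) : Prop :=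
  ¬ (completeBipartiteGraph (Fin a) (Fin b)).IsMinor G

/-- The `A_α`-matrix `α·D(G) + (1-α)·A(G)` of a graph. -/
noncomputable def aMatrix {V : Type*} [Fintype V] (G : SimpleGraph V) (α : ℝ) :
    Matrix V V ℝ :=
  Matrix.of fun u w =>
    (if u = w then α * ∑ z, (if G.Adj w z then (1 : ℝ) else 0) else 0)
    + (if G.Adj u w then (1 - α) else 0)

/-- The `A_α`-spectral radius: the largest eigenvalue of the `A_α`-matrix. -/
noncomputable def lambdaAlpha {V : Type*} [Fintype V] [DecidableEq V]
    (G : SimpleGraph V) (α : ℝ) : ℝ :=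
  sSup (spectrum ℝ (aMatrix G α))


/-- `τ = ⌊(b+1)/(a+1)⌋`, the number of stars of the star forest `F_{a,b}`. -/
def tauOf (a b : ℕ) : ℕ := (b + 1) / (a + 1)

/-- The star forest `F_{a,b}` on `b+1` vertices: the disjoint union of
`τ = ⌊(b+1)/(a+1)⌋` stars, `τ-1` of them isomorphic to `K_{1,a}` and one
isomorphic to `K_{1,c}` with `c = b - (a+1)(τ-1)`.  Vertex `i` belongs to the
block `min (i/(a+1)) (τ-1)`, first `τ-1` blocks of size `a+1`, whose first
vertex is the center of its star. -/
def starForest (a b : ℕ) : SimpleGraph (Fin (b + 1)) where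
  Adj i j := i ≠ j ∧
    min ((i : ℕ) / (a + 1)) (tauOf a b - 1) = min ((j : ℕ) / (a + 1)) (tauOf a b - 1) ∧
    ((i : ℕ) = min ((i : ℕ) / (a + 1)) (tauOf a b - 1) * (a + 1) ∨
     (j : ℕ) = min ((j : ℕ) / (a + 1)) (tauOf a b - 1) * (a + 1))
  symm := by
    constructor
    intro i j h
    exact ⟨h.1.symm, h.2.1.symm, h.2.2.symm⟩
  loopless := by constructor; intro i h; exact h.1 rfl

/-- `S^k(K_b)`: the complete graph `K_b` with one edge (between vertices `0`
and `1`) subdivided `k` times. -/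
def subdividedComplete (b k : ℕ) : SimpleGraph (Fin b ⊕ Fin k) where
  Adj x y :=
    match x, y with
    | Sum.inl i, Sum.inl j =>
        i ≠ j ∧ (k = 0 ∨ ¬(((i : ℕ) = 0 ∧ (j : ℕ) = 1) ∨ ((i : ℕ) = 1 ∧ (j : ℕ) = 0)))
    | Sum.inl i, Sum.inr p => ((i : ℕ) = 0 ∧ (p : ℕ) = 0) ∨ ((i : ℕ) = 1 ∧ (p : ℕ) = k - 1)
    | Sum.inr p, Sum.inl i => ((i : ℕ) = 0 ∧ (p : ℕ) = 0) ∨ ((i : ℕ) = 1 ∧ (p : ℕ) = k - 1)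
    | Sum.inr p, Sum.inr q => (p : ℕ) + 1 = (q : ℕ) ∨ (q : ℕ) + 1 = (p : ℕ)
  symm := by
    constructor
    rintro (i | p) (j | q) h
    · exact ⟨h.1.symm, by tauto⟩
    · exact h
    · exact h
    · tauto
  loopless := by
    constructor
    rintro (i | p) h
    · exact h.1 rfl
    · rcases h with h | h <;> omega

/-- The graph `F(a₁,a₂,a₃)`: a complete graph on `a₁+a₂+a₃ = b-1` vertices with
partition `V₁ ∪ V₂ ∪ V₃` (`|Vᵢ| = aᵢ`), together with a path `v₁v₂v₃` on three
new vertices, every vertex of `Vᵢ` joined to `vᵢ`. -/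
def fGraph (a₁ a₂ a₃ : ℕ) : SimpleGraph (Fin (a₁ + a₂ + a₃) ⊕ Fin 3) where
  Adj x y :=
    match x, y with
    | Sum.inl u, Sum.inl w => u ≠ w
    | Sum.inl u, Sum.inr i =>
        ((i : ℕ) = 0 ∧ (u : ℕ) < a₁) ∨
        ((i : ℕ) = 1 ∧ a₁ ≤ (u : ℕ) ∧ (u : ℕ) < a₁ + a₂) ∨
        ((i : ℕ) = 2 ∧ a₁ + a₂ ≤ (u : ℕ))
    | Sum.inr i, Sum.inl u =>
        ((i : ℕ) = 0 ∧ (u : ℕ) < a₁) ∨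
        ((i : ℕ) = 1 ∧ a₁ ≤ (u : ℕ) ∧ (u : ℕ) < a₁ + a₂) ∨
        ((i : ℕ) = 2 ∧ a₁ + a₂ ≤ (u : ℕ))
    | Sum.inr i, Sum.inr j => (i : ℕ) + 1 = (j : ℕ) ∨ (j : ℕ) + 1 = (i : ℕ)
  symm := by
    constructor
    rintro (u | i) (w | j) h
    · exact h.symm
    · exact h
    · exact h
    · tauto
  loopless := by
    constructor
    rintro (u | i) h
    · exact h rfl
    · rcases h with h | h <;> omega

/-- The Petersen graph: outer `5`-cycle, inner pentagram, five spokes. -/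
def petersen : SimpleGraph (Fin 5 ⊕ Fin 5) where
  Adj x y :=
    match x, y with
    | Sum.inl i, Sum.inl j => (j : ℕ) = ((i : ℕ) + 1) % 5 ∨ (i : ℕ) = ((j : ℕ) + 1) % 5
    | Sum.inl i, Sum.inr j => i = j
    | Sum.inr i, Sum.inl j => i = j
    | Sum.inr i, Sum.inr j => (j : ℕ) = ((i : ℕ) + 2) % 5 ∨ (i : ℕ) = ((j : ℕ) + 2) % 5
  symm := by
    constructor
    rintro (i | i) (j | j) h
    · tauto
    · exact h.symm
    · exact h.symm
    · tauto
  loopless := by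
    constructor
    rintro (i | i) h <;>
      · have hi : (i : ℕ) < 5 := i.isLt
        rcases h with h | h <;> omega

/-- The join `G ∨ H` of two graphs. -/
def joinG {V W : Type*} (G : SimpleGraph V) (H : SimpleGraph W) : SimpleGraph (V ⊕ W) where
  Adj x y :=
    match x, y with
    | Sum.inl u, Sum.inl w => G.Adj u w
    | Sum.inl _, Sum.inr _ => True
    | Sum.inr _, Sum.inl _ => True
    | Sum.inr u, Sum.inr w => H.Adj u w
  symm := by
    constructor
    rintro (u | u) (w | w) h
    · exact h.symm
    · trivial
    · trivial
    · exact h.symm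
  loopless := by
    constructor
    rintro (u | u) h
    · exact G.loopless.irrefl u h
    · exact H.loopless.irrefl u h

/-- The disjoint union of two graphs. -/
def disjUnion {V W : Type*} (G : SimpleGraph V) (H : SimpleGraph W) : SimpleGraph (V ⊕ W) where
  Adj x y :=
    match x, y with
    | Sum.inl u, Sum.inl w => G.Adj u w
    | Sum.inl _, Sum.inr _ => False
    | Sum.inr _, Sum.inl _ => False
    | Sum.inr u, Sum.inr w => H.Adj u w
  symm := by
    constructor
    rintro (u | u) (w | w) h
    · exact h.symm
    · exact h
    · exact h
    · exact h.symm
  loopless := by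
    constructor
    rintro (u | u) h
    · exact G.loopless.irrefl u h
    · exact H.loopless.irrefl u h

/-- `k` disjoint copies of the graph `H`. -/
def copies (k : ℕ) {W : Type*} (H : SimpleGraph W) : SimpleGraph (Fin k × W) where
  Adj x y := x.1 = y.1 ∧ H.Adj x.2 y.2
  symm := by constructor; rintro x y ⟨h1, h2⟩; exact ⟨h1.symm, h2.symm⟩
  loopless := by constructor; rintro x ⟨h1, h2⟩; exact H.loopless.irrefl _ h2

/-- `K_b^e`: the complete graph `K_b` with the edge between vertices `0` and
`1` removed and a pendant vertex attached to each of `0` and `1`. -/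
def kbE (b : ℕ) : SimpleGraph (Fin b ⊕ Fin 2) where
  Adj x y :=
    match x, y with
    | Sum.inl i, Sum.inl j =>
        i ≠ j ∧ ¬(((i : ℕ) = 0 ∧ (j : ℕ) = 1) ∨ ((i : ℕ) = 1 ∧ (j : ℕ) = 0))
    | Sum.inl i, Sum.inr p => (i : ℕ) = (p : ℕ)
    | Sum.inr p, Sum.inl i => (i : ℕ) = (p : ℕ)
    | Sum.inr _, Sum.inr _ => False
  symm := by
    constructor
    rintro (i | p) (j | q) h
    · exact ⟨h.1.symm, by tauto⟩
    · exact h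
    · exact h
    · exact h
  loopless := by
    constructor
    rintro (i | p) h
    · exact h.1 rfl
    · exact h

/-- The number of neighbours of `v` lying in the set `F`. -/
noncomputable def degIn {V : Type*} (G : SimpleGraph V) (F : Set V) (v : V) : ℕ :=
  (G.neighborSet v ∩ F).ncard

/-- `F` is a union of (vertex sets of) connected components of `G - S`. -/
def isComponentUnion {V : Type*} (G : SimpleGraph V) (S : Set V) (F : Set V) : Prop :=
  F ⊆ Sᶜ ∧ ∀ u v : ↥(Sᶜ : Set V), (G.induce Sᶜ).Reachable u v → (u : V) ∈ F → (v : V) ∈ F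

/-- A graph has the `(a,b)`-property if it is `K_{r,s}`-minor free for all
positive `r, s` with `r + s = b + 1` and `r ≤ ω = min {a, ⌊(b+1)/2⌋}`. -/
def abProperty (a b : ℕ) {V : Type*} (G : SimpleGraph V) : Prop :=
  ∀ r s : ℕ, 0 < r → 0 < s → r + s = b + 1 → r ≤ min a ((b + 1) / 2) →
    ¬ (completeBipartiteGraph (Fin r) (Fin s)).IsMinor G

/-!
A connected vertex set `C` together with `b` vertices outside `C`, each adjacent to `C`, is a
`K_{1,b}` minor, so in a `K_{1,b}`-minor free graph every connected set has fewer than `b` outer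
neighbours. Extremality is used only to get `|N(v*)| ≥ b - 1`: the clique `K_{b-1}` with a pendant
path is connected and `K_{1,b}`-minor free, a test vector shows that its `A_α`-spectral radius
exceeds `b - 2`, and the eigenvalue equation at `v*` bounds `λ_α(G⋆)` by the degree of `v*`.
The three bounds then follow by taking `C = {v}`, or `C` the vertex set of a shortest path from
`v*` to `v`; such a path meets `N(v*)` and `N(v)` in one vertex each, and misses `N(v) ∩ W`
when `dist(v*, v) ≤ 2`.
-/

open Matrix

theorem Set.pred_ncard_le_ncard_diff_of_inter_subset_singleton {α : Type*} {s t : Set α} {a : α}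
    (h : s ∩ t ⊆ {a}) (hs : s.Finite := by toFinite_tac) : s.ncard - 1 ≤ (s \ t).ncard :=
  (Set.pred_ncard_le_ncard_sdiff_singleton s a).trans <|
    Set.ncard_le_ncard (fun _ hx => ⟨hx.1, fun hxt => hx.2 (h ⟨hx.1, hxt⟩)⟩) hs.sdiff

theorem Fin.ncard_setOf_val_lt_le (n k : ℕ) : {v : Fin n | (v : ℕ) < k}.ncard ≤ k :=
  calc _ ≤ (Finset.range k : Set ℕ).ncard :=
        Set.ncard_le_ncard_of_injOn Fin.val (fun v hv => by simpa using hv) Fin.val_injective.injOn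
    _ = k := by rw [Set.ncard_coe_finset, Finset.card_range]

theorem Matrix.IsHermitian.dotProduct_mulVec_le_sSup_spectrum {ι : Type*} [Fintype ι]
    [DecidableEq ι] {M : Matrix ι ι ℝ} (hM : M.IsHermitian) (y : ι → ℝ) :
    y ⬝ᵥ (M *ᵥ y) ≤ sSup (spectrum ℝ M) * (y ⬝ᵥ y) := by
  set c := sSup (spectrum ℝ M)
  have hpsd : (algebraMap ℝ (Matrix ι ι ℝ) c - M).PosSemidef := by
    refine Matrix.posSemidef_iff_isHermitian_and_spectrum_nonneg.mpr ⟨?_, ?_⟩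
    · exact (isHermitian_diagonal_of_self_adjoint _ (by ext; simp)).sub hM
    · rw [← spectrum.singleton_sub_eq]
      rintro _ ⟨_, rfl, μ, hμ, rfl⟩
      exact sub_nonneg.mpr (le_csSup (Matrix.finite_real_spectrum (A := M)).bddAbove hμ)
  have := hpsd.dotProduct_mulVec_nonneg y
  simp only [star_trivial, Algebra.algebraMap_eq_smul_one, sub_mulVec, smul_mulVec, one_mulVec,
    dotProduct_sub, dotProduct_smul, smul_eq_mul, sub_nonneg] at this
  exact this

section AMatrix

variable {V : Type*} [Fintype V] (G : SimpleGraph V) (α : ℝ)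

theorem aMatrix_isHermitian : (aMatrix G α).IsHermitian := by
  ext i j
  by_cases h : i = j
  · subst h; simp
  · simp [aMatrix, h, Ne.symm h, G.adj_comm]

theorem aMatrix_mulVec_apply (x : V → ℝ) (v : V) :
    (aMatrix G α *ᵥ x) v = ∑ w, if G.Adj v w then α * x v + (1 - α) * x w else 0 := by
  have hdiag : α * (∑ z, if G.Adj v z then (1 : ℝ) else 0) * x v =
      ∑ w, if G.Adj v w then α * x v else 0 := by
    rw [Finset.mul_sum, Finset.sum_mul]
    exact Finset.sum_congr rfl fun w _ => by split_ifs <;> simp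
  simp only [mulVec, dotProduct, aMatrix, Matrix.of_apply, add_mul, ite_mul, zero_mul]
  rw [Finset.sum_add_distrib, Finset.sum_ite_eq, if_pos (Finset.mem_univ _), hdiag,
    ← Finset.sum_add_distrib]
  exact Finset.sum_congr rfl fun w _ => by split_ifs <;> simp

theorem dotProduct_aMatrix_mulVec (y : V → ℝ) :
    y ⬝ᵥ (aMatrix G α *ᵥ y) =
      ∑ v, ∑ w, if G.Adj v w then α * y v ^ 2 + (1 - α) * (y v * y w) else 0 := by
  simp only [dotProduct, aMatrix_mulVec_apply, Finset.mul_sum]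
  refine Finset.sum_congr rfl fun v _ => Finset.sum_congr rfl fun w _ => ?_
  split_ifs <;> ring

theorem sum_le_dotProduct_aMatrix_mulVec (hα0 : 0 ≤ α) (hα1 : α ≤ 1) {y : V → ℝ}
    (hy : ∀ v, 0 ≤ y v) {P : Finset (V × V)} (hP : ∀ x ∈ P, G.Adj x.1 x.2) :
    ∑ x ∈ P, (α * y x.1 ^ 2 + (1 - α) * (y x.1 * y x.2)) ≤ y ⬝ᵥ (aMatrix G α *ᵥ y) := by
  rw [dotProduct_aMatrix_mulVec, ← Fintype.sum_prod_type']
  refine le_trans (le_of_eq (Finset.sum_congr rfl fun x hx => (if_pos (hP x hx)).symm))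
    (Finset.sum_le_sum_of_subset_of_nonneg (Finset.subset_univ P) fun x _ _ => ?_)
  have := hy x.1
  have := hy x.2
  have : 0 ≤ 1 - α := by linarith
  split_ifs <;> positivity

theorem le_ncard_neighborSet_of_mulVec_eq_smul {x : V → ℝ} {μ : ℝ} {v : V}
    (heig : aMatrix G α *ᵥ x = μ • x) (hα : α ≤ 1) (hxv : 0 < x v) (hmax : ∀ w, x w ≤ x v) :
    μ ≤ (G.neighborSet v).ncard := by
  have hrow : μ * x v ≤ (G.neighborSet v).ncard * x v := by
    calc μ * x v = ∑ w, if G.Adj v w then α * x v + (1 - α) * x w else 0 := by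
          rw [← aMatrix_mulVec_apply, heig, Pi.smul_apply, smul_eq_mul]
      _ ≤ ∑ w, if G.Adj v w then x v else 0 := by
          gcongr with w
          split_ifs
          · nlinarith [hmax w]
          · rfl
      _ = (G.neighborSet v).ncard * x v := by
          rw [Finset.sum_ite, Finset.sum_const_zero, add_zero, Finset.sum_const, nsmul_eq_mul,
            ← G.neighborFinset_eq_filter, Set.ncard_eq_toFinset_card', G.neighborFinset_def]
  exact le_of_mul_le_mul_right hrow hxv

end AMatrix

namespace SimpleGraph

section Minor

variable {V : Type*} {G : SimpleGraph V}

theorem Walk.dist_add_dist_of_length_eq_dist (hconn : G.Connected) {u v c : V}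
    (p : G.Walk u v) (hp : p.length = G.dist u v) (hc : c ∈ p.support) :
    G.dist u c + G.dist c v = G.dist u v := by
  classical
  have hlen := congrArg Walk.length (p.take_spec hc)
  rw [Walk.length_append] at hlen
  have h₁ := dist_le (p.takeUntil c hc)
  have h₂ := dist_le (p.dropUntil c hc)
  have h₃ : G.dist u v ≤ G.dist u c + G.dist c v := hconn.dist_triangle
  omega

theorem Walk.getVert_dist_of_length_eq_dist (hconn : G.Connected) {u v c : V}
    (p : G.Walk u v) (hp : p.length = G.dist u v) (hc : c ∈ p.support) :
    p.getVert (G.dist u c) = c := by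
  classical
  have hlen := congrArg Walk.length (p.take_spec hc)
  rw [Walk.length_append] at hlen
  have h₁ := dist_le (p.takeUntil c hc)
  have h₂ := dist_le (p.dropUntil c hc)
  have h₃ := p.dist_add_dist_of_length_eq_dist hconn hp hc
  rw [show G.dist u c = (p.takeUntil c hc).length by omega]
  exact Walk.getVert_length_takeUntil hc

theorem Walk.neighborSet_inter_support_subset (hconn : G.Connected) {u v : V}
    (p : G.Walk u v) (hp : p.length = G.dist u v) :
    G.neighborSet u ∩ {c | c ∈ p.support} ⊆ {p.getVert 1} := fun c ⟨huc, hc⟩ => by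
  rw [Set.mem_singleton_iff, ← dist_eq_one_iff_adj.mpr huc,
    p.getVert_dist_of_length_eq_dist hconn hp hc]

theorem Walk.neighborSet_end_inter_support_subset (hconn : G.Connected) {u v : V}
    (p : G.Walk u v) (hp : p.length = G.dist u v) :
    G.neighborSet v ∩ {c | c ∈ p.support} ⊆ {p.getVert (G.dist u v - 1)} := fun c ⟨hvc, hc⟩ => by
  have hsum := p.dist_add_dist_of_length_eq_dist hconn hp hc
  rw [dist_eq_one_iff_adj.mpr hvc.symm] at hsum
  rw [Set.mem_singleton_iff, ← hsum, Nat.add_sub_cancel,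
    p.getVert_dist_of_length_eq_dist hconn hp hc]

def boundary (G : SimpleGraph V) (C : Set V) : Set V := {v | v ∉ C ∧ ∃ c ∈ C, G.Adj c v}

theorem star_isMinor_iff [Finite V] {m : ℕ} :
    (completeBipartiteGraph (Fin 1) (Fin m)).IsMinor G ↔
      ∃ C : Set V, (G.induce C).Connected ∧ m ≤ (G.boundary C).ncard := by
  constructor
  · rintro ⟨f, -, hconn, hdisj, hadj⟩
    have hcross (i : Fin m) : ∃ z ∈ f (.inr i), z ∈ G.boundary (f (.inl 0)) := by
      obtain ⟨c, hc, z, hz, hcz⟩ := hadj (.inl 0) (.inr i) (by simp)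
      exact ⟨z, hz, (hdisj _ _ (by simp)).notMem_of_mem_right hz, c, hc, hcz⟩
    choose z hzf hzB using hcross
    have hz : Function.Injective z := fun i j hij => by
      by_contra hne
      exact (hdisj (.inr i) (.inr j) (by simpa using hne)).notMem_of_mem_left (hzf i) (hij ▸ hzf j)
    refine ⟨f (.inl 0), hconn _, ?_⟩
    calc m = (Set.range z).ncard := by
          rw [Set.ncard_range_of_injective hz, Nat.card_eq_fintype_card, Fintype.card_fin]
      _ ≤ _ := Set.ncard_le_ncard (Set.range_subset_iff.mpr hzB)
  · rintro ⟨C, hC, hm⟩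
    have : Fintype (G.boundary C) := Fintype.ofFinite _
    obtain ⟨l⟩ : Nonempty (Fin m ↪ G.boundary C) := by
      rwa [Function.Embedding.nonempty_iff_card_le, Fintype.card_fin, ← Nat.card_eq_fintype_card]
    refine ⟨Sum.elim (fun _ => C) (fun i => {(l i : V)}), ?_, ?_, ?_, ?_⟩
    · rintro (_ | i)
      · exact hC.nonempty.elim fun c => ⟨c, c.2⟩
      · exact Set.singleton_nonempty _
    · rintro (_ | i)
      · exact hC
      · simp
    · rintro (a | i) (a' | j) hne
      · exact absurd (congrArg Sum.inl (Subsingleton.elim a a')) hne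
      · exact Set.disjoint_singleton_right.mpr (l j).2.1
      · exact Set.disjoint_singleton_left.mpr (l i).2.1
      · exact Set.disjoint_singleton.mpr fun h =>
          hne (congrArg Sum.inr (l.injective (Subtype.ext h)))
    · rintro (_ | i) (_ | j) hadj
      · simp at hadj
      · obtain ⟨c, hc, hcl⟩ := (l j).2.2
        exact ⟨c, hc, l j, rfl, hcl⟩
      · obtain ⟨c, hc, hcl⟩ := (l i).2.2
        exact ⟨l i, rfl, c, hc, hcl.symm⟩
      · simp at hadj

theorem kabMinorFree_one_iff [Finite V] {m : ℕ} :
    kabMinorFree 1 m G ↔ ∀ C : Set V, (G.induce C).Connected → (G.boundary C).ncard < m := by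
  simp [kabMinorFree, star_isMinor_iff]

section Finite

variable [Finite V] {b : ℕ}

theorem ncard_neighborSet_lt (hfree : kabMinorFree 1 b G) (v : V) :
    (G.neighborSet v).ncard < b := by
  refine lt_of_le_of_lt (Set.ncard_le_ncard fun w hw => ?_)
    (kabMinorFree_one_iff.mp hfree {v} (by simp))
  exact ⟨fun h => G.loopless.irrefl v ((Set.mem_singleton_iff.mp h) ▸ hw), v, rfl, hw⟩

theorem ncard_neighborSet_sdiff_add_lt (hfree : kabMinorFree 1 b G) {C : Set V}
    (hC : (G.induce C).Connected) {u v : V} (hu : u ∈ C) (hv : v ∈ C) :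
    (G.neighborSet u \ C).ncard + ((G.neighborSet v ∩ (G.neighborSet u ∪ {u})ᶜ) \ C).ncard < b := by
  have hdisj : Disjoint (G.neighborSet u \ C) ((G.neighborSet v ∩ (G.neighborSet u ∪ {u})ᶜ) \ C) :=
    Set.disjoint_left.mpr fun w hw hw' => hw'.1.2 (.inl hw.1)
  rw [← Set.ncard_union_eq hdisj]
  refine lt_of_le_of_lt (Set.ncard_le_ncard ?_) (kabMinorFree_one_iff.mp hfree C hC)
  rintro w (⟨hw, hwC⟩ | ⟨⟨hw, -⟩, hwC⟩)
  · exact ⟨hwC, u, hu, hw⟩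
  · exact ⟨hwC, v, hv, hw⟩

theorem degIn_compl_eq_zero_of_degIn_eq (hfree : kabMinorFree 1 b G) {u v : V}
    (hv : v ∈ G.neighborSet u) (hdeg : degIn G (G.neighborSet u) v = b - 2) :
    degIn G ((G.neighborSet u ∪ {u})ᶜ) v = 0 := by
  have hsplit : insert u (G.neighborSet v ∩ G.neighborSet u ∪
      G.neighborSet v ∩ (G.neighborSet u ∪ {u})ᶜ) ⊆ G.neighborSet v := by
    rintro w (rfl | ⟨hw, -⟩ | ⟨hw, -⟩)
    · exact hv.symm
    all_goals exact hw
  have hcard := (Set.ncard_le_ncard hsplit).trans_lt (ncard_neighborSet_lt hfree v)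
  rw [Set.ncard_insert_of_notMem (by rintro (⟨-, h⟩ | ⟨-, h⟩) <;> simp_all),
    Set.ncard_union_eq (Set.disjoint_left.mpr fun w hw hw' => hw'.2 (.inl hw.2))] at hcard
  unfold degIn at hdeg ⊢
  omega

theorem degIn_compl_le_two (hconn : G.Connected) (hfree : kabMinorFree 1 b G) {u : V}
    (hU : b - 1 ≤ (G.neighborSet u).ncard) (v : V) :
    degIn G ((G.neighborSet u ∪ {u})ᶜ) v ≤ 2 := by
  obtain ⟨p, hp⟩ := hconn.exists_walk_length_eq_dist u v
  have hlt := ncard_neighborSet_sdiff_add_lt hfree p.connected_induce_support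
    p.start_mem_support p.end_mem_support
  have hU' := Set.pred_ncard_le_ncard_diff_of_inter_subset_singleton
    (p.neighborSet_inter_support_subset hconn hp)
  have hW' := Set.pred_ncard_le_ncard_diff_of_inter_subset_singleton
    (s := G.neighborSet v ∩ (G.neighborSet u ∪ {u})ᶜ)
    fun c hc => p.neighborSet_end_inter_support_subset hconn hp ⟨hc.1.1, hc.2⟩
  unfold degIn
  omega

theorem degIn_compl_le_one (hconn : G.Connected) (hfree : kabMinorFree 1 b G) {u v : V}
    (hU : b - 1 ≤ (G.neighborSet u).ncard) (hv : G.dist u v ≤ 2) :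
    degIn G ((G.neighborSet u ∪ {u})ᶜ) v ≤ 1 := by
  obtain ⟨p, hp⟩ := hconn.exists_walk_length_eq_dist u v
  have hlt := ncard_neighborSet_sdiff_add_lt hfree p.connected_induce_support
    p.start_mem_support p.end_mem_support
  have hU' := Set.pred_ncard_le_ncard_diff_of_inter_subset_singleton
    (p.neighborSet_inter_support_subset hconn hp)
  -- a vertex of the walk adjacent to `v` is at distance at most `1` from `u`
  have hW' : G.neighborSet v ∩ (G.neighborSet u ∪ {u})ᶜ ⊆
      (G.neighborSet v ∩ (G.neighborSet u ∪ {u})ᶜ) \ {c | c ∈ p.support} := by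
    rintro c ⟨hvc, hcW⟩
    refine ⟨⟨hvc, hcW⟩, fun hc => hcW ?_⟩
    have hsum := p.dist_add_dist_of_length_eq_dist hconn hp hc
    rw [dist_eq_one_iff_adj.mpr hvc.symm] at hsum
    rcases (show G.dist u c = 0 ∨ G.dist u c = 1 by omega) with h | h
    · exact .inr (hconn.dist_eq_zero_iff.mp h).symm
    · exact .inl (dist_eq_one_iff_adj.mp h)
  have := Set.ncard_le_ncard hW'
  unfold degIn
  omega

end Finite

end Minor

def cliqueWithPath (n k : ℕ) : SimpleGraph (Fin n) :=
  pathGraph n ⊔ fromRel fun i j => (i : ℕ) < k ∧ (j : ℕ) < k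

namespace cliqueWithPath

variable {n k : ℕ}

theorem adj_iff {i j : Fin n} :
    (cliqueWithPath n k).Adj i j ↔
      (i : ℕ) + 1 = j ∨ (j : ℕ) + 1 = i ∨ i ≠ j ∧ (i : ℕ) < k ∧ (j : ℕ) < k := by
  simp only [cliqueWithPath, sup_adj, pathGraph_adj, fromRel_adj]
  tauto

theorem connected (hn : 0 < n) : (cliqueWithPath n k).Connected := by
  obtain ⟨m, rfl⟩ := Nat.exists_eq_add_of_lt hn
  exact (pathGraph_connected _).mono le_sup_left

theorem exists_mem_support_val_eq {s t : Fin n} (p : (cliqueWithPath n k).Walk s t) {y : ℕ}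
    (hk : k ≤ y) (hs : y ≤ s) (ht : (t : ℕ) < y) : ∃ m ∈ p.support, (m : ℕ) = y := by
  induction p with
  | nil => omega
  | @cons a c _ hac q ih =>
    rcases hs.eq_or_lt with rfl | hlt
    · exact ⟨a, q.support.mem_cons_self .., rfl⟩
    · have hc : y ≤ c := by rcases adj_iff.mp hac with h | h | h <;> omega
      obtain ⟨m, hm, rfl⟩ := ih hc ht
      exact ⟨m, List.mem_cons_of_mem _ hm, rfl⟩

theorem mem_of_lt_of_le {C : Set (Fin n)} (hC : ((cliqueWithPath n k).induce C).Connected)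
    {c₁ c₂ y : Fin n} (hc₁ : c₁ ∈ C) (hc₂ : c₂ ∈ C) (hk : k ≤ y) (h₁ : c₁ < y) (h₂ : y ≤ c₂) :
    y ∈ C := by
  obtain ⟨q⟩ := hC.preconnected ⟨c₂, hc₂⟩ ⟨c₁, hc₁⟩
  obtain ⟨m, hm, hmy⟩ := exists_mem_support_val_eq (q.map (Embedding.induce C).toHom) hk h₂ h₁
  rw [Walk.support_map, List.mem_map] at hm
  obtain ⟨m', -, rfl⟩ := hm
  exact Fin.ext hmy ▸ m'.2

theorem subsingleton_above (C : Set (Fin n)) :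
    {v : Fin n | (∃ c ∈ C, (c : ℕ) + 1 = v) ∧ ∀ c ∈ C, c < v}.Subsingleton := by
  rintro v₁ ⟨⟨c₁, hc₁, h₁⟩, hv₁⟩ v₂ ⟨⟨c₂, hc₂, h₂⟩, hv₂⟩
  have := hv₁ c₂ hc₂
  have := hv₂ c₁ hc₁
  exact Fin.ext (by omega)

theorem subsingleton_below (C : Set (Fin n)) :
    {v : Fin n | (∃ c ∈ C, (v : ℕ) + 1 = c) ∧ ∀ c ∈ C, v < c}.Subsingleton := by
  rintro v₁ ⟨⟨c₁, hc₁, h₁⟩, hv₁⟩ v₂ ⟨⟨c₂, hc₂, h₂⟩, hv₂⟩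
  have := hv₁ c₂ hc₂
  have := hv₂ c₁ hc₁
  exact Fin.ext (by omega)

theorem mem_above_or_below {C : Set (Fin n)} (hC : ((cliqueWithPath n k).induce C).Connected)
    {v : Fin n} (hv : v ∈ (cliqueWithPath n k).boundary C) (hk : k ≤ v) :
    ((∃ c ∈ C, (c : ℕ) + 1 = v) ∧ ∀ c ∈ C, c < v) ∨
      ((∃ c ∈ C, (v : ℕ) + 1 = c) ∧ ∀ c ∈ C, v < c) := by
  obtain ⟨hvC, c, hc, hcv⟩ := hv
  rcases adj_iff.mp hcv with h | h | h
  · refine .inl ⟨⟨c, hc, h⟩, fun c' hc' => lt_of_not_ge fun hle => hvC ?_⟩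
    exact mem_of_lt_of_le hC hc hc' hk (Fin.lt_def.mpr (by omega)) hle
  · refine .inr ⟨⟨c, hc, h⟩, fun c' hc' => lt_of_not_ge fun hle => hvC ?_⟩
    exact mem_of_lt_of_le hC hc' hc hk (lt_of_le_of_ne hle fun h' => hvC (h' ▸ hc'))
      (Fin.le_def.mpr (by omega))
  · omega

-- Beyond the clique `C` is an interval of the path, so only its two ends have outer neighbours
-- there; when `C` meets the clique, the lower end lies inside the clique.
theorem ncard_boundary_le (hk : 2 ≤ k) {C : Set (Fin n)}
    (hC : ((cliqueWithPath n k).induce C).Connected) :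
    ((cliqueWithPath n k).boundary C).ncard ≤ k := by
  set above := {v : Fin n | (∃ c ∈ C, (c : ℕ) + 1 = v) ∧ ∀ c ∈ C, c < v}
  set below := {v : Fin n | (∃ c ∈ C, (v : ℕ) + 1 = c) ∧ ∀ c ∈ C, v < c}
  have habove : above.ncard ≤ 1 := Set.ncard_le_one_iff_subsingleton.mpr (subsingleton_above C)
  by_cases hclique : ∃ c₀ ∈ C, (c₀ : ℕ) < k
  · obtain ⟨c₀, hc₀, hc₀k⟩ := hclique
    have hsub : (cliqueWithPath n k).boundary C ⊆ ({v : Fin n | (v : ℕ) < k} \ {c₀}) ∪ above := by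
      intro v hv
      by_cases hvk : (v : ℕ) < k
      · exact .inl ⟨hvk, fun h => hv.1 (h ▸ hc₀)⟩
      · rcases mem_above_or_below hC hv (by omega) with h | ⟨-, h⟩
        · exact .inr h
        · exact absurd (Fin.lt_def.mp (h c₀ hc₀)) (by omega)
    have hclique_card := Fin.ncard_setOf_val_lt_le n k
    calc _ ≤ _ := Set.ncard_le_ncard hsub
      _ ≤ ({v : Fin n | (v : ℕ) < k} \ {c₀}).ncard + above.ncard := Set.ncard_union_le _ _
      _ ≤ k := by
        rw [Set.ncard_sdiff_singleton_of_mem (show c₀ ∈ {v : Fin n | (v : ℕ) < k} from hc₀k)]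
        omega
  · push Not at hclique
    have hsub : (cliqueWithPath n k).boundary C ⊆ above ∪ below := by
      intro v hv
      by_cases hvk : (v : ℕ) < k
      · obtain ⟨-, c, hc, hcv⟩ := hv
        have := hclique c hc
        refine .inr ⟨⟨c, hc, ?_⟩, fun c' hc' => Fin.lt_def.mpr ?_⟩
        · rcases adj_iff.mp hcv with h | h | h <;> omega
        · have := hclique c' hc'
          omega
      · exact mem_above_or_below hC hv (by omega)
    calc _ ≤ _ := Set.ncard_le_ncard hsub
      _ ≤ above.ncard + below.ncard := Set.ncard_union_le _ _
      _ ≤ k := by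
        have : below.ncard ≤ 1 := Set.ncard_le_one_iff_subsingleton.mpr (subsingleton_below C)
        omega

theorem kabMinorFree_one_succ (hk : 2 ≤ k) : kabMinorFree 1 (k + 1) (cliqueWithPath n k) :=
  kabMinorFree_one_iff.mpr fun _ hC => Nat.lt_succ_of_le (ncard_boundary_le hk hC)

def testVector (n k : ℕ) (t : ℝ) (v : Fin n) : ℝ :=
  if (v : ℕ) < k then 1 else if (v : ℕ) = k then t else 0

theorem testVector_dotProduct_self (hkn : k < n) (t : ℝ) :
    testVector n k t ⬝ᵥ testVector n k t = k + t ^ 2 := by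
  set p : Fin n := ⟨k, hkn⟩
  have hpQ : p ∉ Finset.Iio p := by simp
  rw [dotProduct, ← Finset.sum_subset (Finset.subset_univ (insert p (Finset.Iio p))),
    Finset.sum_insert hpQ, Finset.sum_congr rfl fun v hv => by
      rw [testVector, if_pos (Fin.lt_def.mp (Finset.mem_Iio.mp hv))]]
  · simp only [testVector, lt_self_iff_false, ↓reduceIte, mul_one, Finset.sum_const, Fin.card_Iio,
      nsmul_eq_mul, p]
    ring
  · intro v _ hv
    rw [Finset.mem_insert, not_or, Finset.mem_Iio, Fin.lt_def, Fin.ext_iff] at hv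
    have hvk : (v : ℕ) ≠ k := hv.1
    have hvk' : ¬(v : ℕ) < k := hv.2
    simp [testVector, hvk, hvk']

theorem le_dotProduct_aMatrix_mulVec_testVector (hk : 1 ≤ k) (hkn : k < n) {α t : ℝ}
    (hα0 : 0 ≤ α) (hα1 : α ≤ 1) (ht : 0 ≤ t) :
    k * k - k + 2 * ((1 - α) * t) ≤
      testVector n k t ⬝ᵥ (aMatrix (cliqueWithPath n k) α *ᵥ testVector n k t) := by
  set p : Fin n := ⟨k, hkn⟩
  set q : Fin n := ⟨k - 1, by omega⟩
  set Q := Finset.Iio p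
  have hpQ : p ∉ Q := by simp [Q]
  have hqp : q ≠ p := Fin.ne_of_val_ne (by simp only [p, q]; omega)
  have hyQ : ∀ v ∈ Q, testVector n k t v = 1 := fun v hv =>
    if_pos (Fin.lt_def.mp (Finset.mem_Iio.mp hv))
  have hadjQ : ∀ x ∈ Q.offDiag, (cliqueWithPath n k).Adj x.1 x.2 := fun x hx => by
    obtain ⟨hv, hw, hvw⟩ := Finset.mem_offDiag.mp hx
    exact adj_iff.mpr (.inr (.inr
      ⟨hvw, Fin.lt_def.mp (Finset.mem_Iio.mp hv), Fin.lt_def.mp (Finset.mem_Iio.mp hw)⟩))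
  have hadj : (cliqueWithPath n k).Adj q p := adj_iff.mpr (.inl (by simp only [p, q]; omega))
  refine le_trans ?_ (sum_le_dotProduct_aMatrix_mulVec _ _ hα0 hα1
    (P := insert (q, p) (insert (p, q) Q.offDiag)) (fun v => ?_) ?_)
  · rw [Finset.sum_insert (by simp [hqp, hpQ]), Finset.sum_insert (by simp [hpQ]),
      Finset.sum_congr rfl fun x hx => by
        rw [hyQ x.1 (Finset.mem_offDiag.mp hx).1, hyQ x.2 (Finset.mem_offDiag.mp hx).2.1],
      Finset.sum_const, Finset.offDiag_card, Fin.card_Iio, show (p : ℕ) = k from rfl]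
    have hqk : (q : ℕ) < k := by simp only [q]; omega
    simp only [testVector, if_pos hqk, lt_irrefl, if_false, if_true, nsmul_eq_mul,
      Nat.cast_sub (Nat.le_mul_self k), Nat.cast_mul, p]
    nlinarith [sq_nonneg t]
  · simp only [testVector]
    split_ifs <;> positivity
  · simp only [Finset.mem_insert]
    rintro x (rfl | rfl | hx)
    · exact hadj
    · exact hadj.symm
    · exact hadjQ x hx

theorem sub_one_lt_lambdaAlpha (hk : 1 ≤ k) (hkn : k < n) {α : ℝ} (hα0 : 0 ≤ α) (hα1 : α < 1) :
    (k : ℝ) - 1 < lambdaAlpha (cliqueWithPath n k) α := by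
  have hk0 : (0 : ℝ) < k := by exact_mod_cast hk
  -- The weight `t` on the first path vertex makes `(k - 1) t² < 2 (1 - α) t`: the edge from the
  -- clique to the path beats the clique's own quotient `k - 1`.
  set t : ℝ := (1 - α) / k
  have ht : 0 < t := div_pos (by linarith) hk0
  have htk : k * t = 1 - α := mul_div_cancel₀ _ hk0.ne'
  have hyy := testVector_dotProduct_self hkn t
  have hquad := le_dotProduct_aMatrix_mulVec_testVector hk hkn hα0 hα1.le ht.le
  have hRay := (aMatrix_isHermitian (cliqueWithPath n k) α).dotProduct_mulVec_le_sSup_spectrum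
    (testVector n k t)
  have hyy0 : 0 < testVector n k t ⬝ᵥ testVector n k t := by rw [hyy]; positivity
  refine lt_of_mul_lt_mul_right (lt_of_lt_of_le ?_ hRay) hyy0.le
  rw [hyy]
  nlinarith

end cliqueWithPath

end SimpleGraph

/-- Local structure around the maximal Perron-entry vertex `v*` of an
`A_α`-extremal connected `K_{1,b}`-minor free graph: with
`U = N(v*)`, `U₁ = {v ∈ U : d_U(v) = b-2}`, `U₂ = U ∖ U₁`,
`W = V ∖ (U ∪ {v*})` and `N²(v*) = {w ∈ W : dist(v*,w) = 2}`, a vertex of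
`U₁` has no neighbour in `W`, a vertex of `U₂ ∪ N²(v*)` has at most one, and
a vertex of `W ∖ N²(v*)` has at most two. -/
theorem extremal_K1b_neighbors_in_W
    (n b : ℕ) (hn : b ≤ n) (hb : 3 ≤ b)
    (α : ℝ) (hα0 : 0 ≤ α) (hα1 : α < 1)
    (G : SimpleGraph (Fin n)) (hconn : G.Connected) (hfree : kabMinorFree 1 b G)
    (hmax : ∀ H : SimpleGraph (Fin n), H.Connected → kabMinorFree 1 b H →
      lambdaAlpha H α ≤ lambdaAlpha G α)
    (x : Fin n → ℝ) (hx : ∀ v, 0 < x v)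
    (heig : (aMatrix G α).mulVec x = lambdaAlpha G α • x)
    (vstar : Fin n) (hvstar : ∀ u, x u ≤ x vstar) :
    (∀ v ∈ G.neighborSet vstar,
        degIn G (G.neighborSet vstar) v = b - 2 →
        degIn G ((G.neighborSet vstar ∪ {vstar})ᶜ) v = 0) ∧
    (∀ v : Fin n,
        ((v ∈ G.neighborSet vstar ∧ degIn G (G.neighborSet vstar) v ≠ b - 2) ∨
         (v ∈ ((G.neighborSet vstar ∪ {vstar})ᶜ : Set (Fin n)) ∧ G.dist vstar v = 2)) →
        degIn G ((G.neighborSet vstar ∪ {vstar})ᶜ) v ≤ 1) ∧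
    (∀ v ∈ ((G.neighborSet vstar ∪ {vstar})ᶜ : Set (Fin n)), G.dist vstar v ≠ 2 →
        degIn G ((G.neighborSet vstar ∪ {vstar})ᶜ) v ≤ 2) := by
  obtain ⟨k, rfl⟩ : ∃ k, b = k + 1 := ⟨b - 1, by omega⟩
  have hlam : (k : ℝ) - 1 < lambdaAlpha G α :=
    (SimpleGraph.cliqueWithPath.sub_one_lt_lambdaAlpha (by omega) (by omega) hα0 hα1).trans_le
      (hmax _ (SimpleGraph.cliqueWithPath.connected (by omega))
        (SimpleGraph.cliqueWithPath.kabMinorFree_one_succ (by omega)))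
  have hdeg := le_ncard_neighborSet_of_mulVec_eq_smul G α heig hα1.le (hx vstar) hvstar
  have hU : k ≤ (G.neighborSet vstar).ncard := by
    have : (k : ℝ) < (G.neighborSet vstar).ncard + 1 := by linarith
    exact Nat.lt_succ_iff.mp (by exact_mod_cast this)
  refine ⟨fun v hv hdU => SimpleGraph.degIn_compl_eq_zero_of_degIn_eq hfree hv hdU, ?_,
    fun v _ _ => SimpleGraph.degIn_compl_le_two hconn hfree hU v⟩
  rintro v (⟨hv, -⟩ | ⟨-, hv⟩)
  · exact SimpleGraph.degIn_compl_le_one hconn hfree hU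
      (by rw [SimpleGraph.dist_eq_one_iff_adj.mpr hv]; omega)
  · exact SimpleGraph.degIn_compl_le_one hconn hfree hU hv.le
end

section
/- Let n ≥ b ≥ 3 and α ∈ [0,1). Let G⋆ be a connected K_{1,b}-minor free graph on n vertices attaining the maximum A_α-spectral radius among all connected K_{1,b}-minor free graphs on n vertices, and let x be its Perron vector. Suppose uv is an edge of G⋆ with d_{G⋆}(u) = d_{G⋆}(v), let R = N_{G⋆}(u) ∩ N_{G⋆}(v), and suppose N_{G⋆}(u) ∖ (R ∪ {v}) = {u₁} and N_{G⋆}(v) ∖ (R ∪ {u}) = {v₁} are singletons. If x_u ≥ x_v, then x_{u₁} ≥ x_{v₁}. -/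
open scoped Classical


/-!
Subtracting the eigenvalue equations of `A_α(G)` at `u` and at `v`, whose degrees `d` agree and
whose neighbourhoods differ only in `u₁, v` versus `v₁, u`, gives
`(1 - α) (x_{u₁} - x_{v₁}) = (λ - α d + 1 - α) (x_u - x_v)`,
and `λ > α d` because the eigenvector `x` is positive.
-/

namespace SimpleGraph

variable {V : Type*} [Fintype V]

theorem aMatrix_mulVec_apply (G : SimpleGraph V) (α : ℝ) (x : V → ℝ) (u : V) :
    (aMatrix G α).mulVec x u =
      α * (G.neighborSet u).ncard * x u + (1 - α) * ∑ w ∈ G.neighborFinset u, x w := by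
  have hdeg : ∑ z, (if G.Adj u z then (1 : ℝ) else 0) = (G.neighborSet u).ncard := by
    rw [Finset.sum_boole, ← coe_neighborFinset, Set.ncard_coe_finset]
    congr 2
    ext z
    simp
  simp only [Matrix.mulVec, dotProduct, aMatrix, Matrix.of_apply, add_mul, ite_mul, zero_mul,
    Finset.sum_add_distrib, Finset.sum_ite_eq, Finset.mem_univ, if_true, hdeg]
  rw [← Finset.sum_filter, Finset.mul_sum]
  simp [neighborFinset_eq_filter]

theorem mul_ncard_neighborSet_lt_of_aMatrix_eigenvector {G : SimpleGraph V} {α lam : ℝ}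
    (hα1 : α < 1) {x : V → ℝ} (hx : ∀ v, 0 < x v) (heig : (aMatrix G α).mulVec x = lam • x)
    {u v : V} (huv : G.Adj u v) :
    α * (G.neighborSet u).ncard < lam := by
  have hrow := congrFun heig u
  rw [aMatrix_mulVec_apply, Pi.smul_apply, smul_eq_mul] at hrow
  have hsum : 0 < ∑ w ∈ G.neighborFinset u, x w :=
    Finset.sum_pos (fun w _ => hx w) ⟨v, (mem_neighborFinset G u v).mpr huv⟩
  have hprod : 0 < (lam - α * (G.neighborSet u).ncard) * x u := by
    nlinarith [mul_pos (sub_pos.mpr hα1) hsum]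
  linarith [pos_of_mul_pos_left hprod (hx u).le]

theorem sum_neighborFinset_eq_add_sum_common [DecidableEq V] {G : SimpleGraph V} {u v u₁ : V}
    (huv : G.Adj u v)
    (hu₁ : G.neighborSet u \ (G.neighborSet u ∩ G.neighborSet v ∪ {v}) = {u₁}) (x : V → ℝ) :
    ∑ w ∈ G.neighborFinset u, x w =
      x u₁ + x v + ∑ w ∈ G.neighborFinset u ∩ G.neighborFinset v, x w := by
  set R := G.neighborFinset u ∩ G.neighborFinset v
  have hsub : insert v R ⊆ G.neighborFinset u := by
    simpa [Finset.insert_subset_iff, R] using huv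
  have hdiff : G.neighborFinset u \ insert v R = {u₁} := by
    apply Finset.coe_injective
    simpa [R, Set.union_comm] using hu₁
  have hv : v ∉ R := by simp [R]
  rw [← Finset.sum_sdiff hsub, hdiff, Finset.sum_singleton, Finset.sum_insert hv, add_assoc]

end SimpleGraph

theorem extremal_K1b_perron_private_neighbors_general
    (n : ℕ)
    (α : ℝ) (hα1 : α < 1)
    (G : SimpleGraph (Fin n))
    (x : Fin n → ℝ) (hx : ∀ v, 0 < x v)
    (heig : (aMatrix G α).mulVec x = lambdaAlpha G α • x)
    (u v u₁ v₁ : Fin n) (huv : G.Adj u v)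
    (hdeg : (G.neighborSet u).ncard = (G.neighborSet v).ncard)
    (hu1 : G.neighborSet u \ (G.neighborSet u ∩ G.neighborSet v ∪ {v}) = {u₁})
    (hv1 : G.neighborSet v \ (G.neighborSet u ∩ G.neighborSet v ∪ {u}) = {v₁})
    (hxuv : x v ≤ x u) :
    x v₁ ≤ x u₁ := by
  set lam := lambdaAlpha G α
  set d : ℝ := ((G.neighborSet u).ncard : ℝ)
  have hrow (w : Fin n) := congrFun heig w
  simp only [SimpleGraph.aMatrix_mulVec_apply, Pi.smul_apply, smul_eq_mul] at hrow
  have hrow_u := hrow u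
  have hrow_v := hrow v
  rw [SimpleGraph.sum_neighborFinset_eq_add_sum_common huv hu1] at hrow_u
  rw [Set.inter_comm] at hv1
  rw [SimpleGraph.sum_neighborFinset_eq_add_sum_common huv.symm hv1, Finset.inter_comm,
    ← hdeg] at hrow_v
  have hlt : α * d < lam :=
    SimpleGraph.mul_ncard_neighborSet_lt_of_aMatrix_eigenvector hα1 hx heig huv
  have key : (1 - α) * (x u₁ - x v₁) = (lam - α * d + (1 - α)) * (x u - x v) := by
    linear_combination hrow_u - hrow_v
  have hnonneg : 0 ≤ (1 - α) * (x u₁ - x v₁) :=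
    key ▸ mul_nonneg (by linarith) (sub_nonneg.mpr hxuv)
  linarith [nonneg_of_mul_nonneg_right hnonneg (sub_pos.mpr hα1)]

/-- Monotonicity of Perron entries along twin-like edges in an `A_α`-extremal
connected `K_{1,b}`-minor free graph: if `uv ∈ E`, `d(u) = d(v)`,
`R = N(u) ∩ N(v)`, `N(u) ∖ (R ∪ {v}) = {u₁}`, `N(v) ∖ (R ∪ {u}) = {v₁}`
and `x_u ≥ x_v`, then `x_{u₁} ≥ x_{v₁}`. -/
theorem extremal_K1b_perron_private_neighbors
    (n b : ℕ) (hn : b ≤ n) (hb : 3 ≤ b)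
    (α : ℝ) (hα0 : 0 ≤ α) (hα1 : α < 1)
    (G : SimpleGraph (Fin n)) (hconn : G.Connected) (hfree : kabMinorFree 1 b G)
    (hmax : ∀ H : SimpleGraph (Fin n), H.Connected → kabMinorFree 1 b H →
      lambdaAlpha H α ≤ lambdaAlpha G α)
    (x : Fin n → ℝ) (hx : ∀ v, 0 < x v)
    (heig : (aMatrix G α).mulVec x = lambdaAlpha G α • x)
    (u v u₁ v₁ : Fin n) (huv : G.Adj u v)
    (hdeg : (G.neighborSet u).ncard = (G.neighborSet v).ncard)
    (hu1 : G.neighborSet u \ (G.neighborSet u ∩ G.neighborSet v ∪ {v}) = {u₁})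
    (hv1 : G.neighborSet v \ (G.neighborSet u ∩ G.neighborSet v ∪ {u}) = {v₁})
    (hxuv : x v ≤ x u) :
    x v₁ ≤ x u₁ :=
  extremal_K1b_perron_private_neighbors_general n α hα1 G x hx heig u v u₁ v₁ huv hdeg hu1 hv1 hxuv
end
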